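/- Fix μ ∈ ℝ, c > μ, σ > 0. The function h(ε) = (1−ε)²·φ((c−μ)/((1−ε)σ))·σ − (1−ε)·[1 − Φ((c−μ)/((1−ε)σ))]·(c−μ), defined for ε ∈ (−1, 1), is strictly decreasing in ε. -/

import Mathlib

/-!
Write `s = (1 - ε) σ`, `a = c - μ` and `t = a / s`. Then `h(ε) = G(s) / σ` with
`G(s) = s² φ(a/s) - s (1 - Φ(a/s)) a`. When `G` is differentiated, the contributions of the
inner argument `a / s` cancel (because `φ' t = -t φ t` and `Φ' = φ`), leaving
`G'(s) = s (2 φ(t) - t (1 - Φ(t)))`. This is positive by the Mills-ratio bound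
`t (1 - Φ(t)) ≤ ∫_t^∞ u φ(u) du = φ(t)`, and `s` decreases in `ε`.
-/

open MeasureTheory Real Set ProbabilityTheory

noncomputable def phi (t : ℝ) : ℝ := Real.exp (-t^2/2) / Real.sqrt (2*Real.pi)
noncomputable def Phi (t : ℝ) : ℝ := ∫ u in Set.Iic t, phi u

open Filter

lemma phi_pos (t : ℝ) : 0 < phi t := by
  unfold phi
  positivity

lemma continuous_phi : Continuous phi := by
  unfold phi
  fun_prop

lemma phi_eq_gaussianPDFReal : phi = gaussianPDFReal 0 1 := by
  ext t
  simp [phi, gaussianPDFReal, div_eq_inv_mul]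

lemma integrable_phi : Integrable phi := by
  rw [phi_eq_gaussianPDFReal]
  exact integrable_gaussianPDFReal 0 1

lemma integral_phi : ∫ u, phi u = 1 := by
  rw [phi_eq_gaussianPDFReal]
  exact integral_gaussianPDFReal_eq_one 0 one_ne_zero

lemma integrable_mul_phi : Integrable (fun u => u * phi u) := by
  refine ((integrable_mul_exp_neg_mul_sq (b := 1/2) (by norm_num)).div_const
    (Real.sqrt (2*Real.pi))).congr (Eventually.of_forall fun u => ?_)
  simp only [phi]
  ring_nf

lemma hasDerivAt_phi (t : ℝ) : HasDerivAt phi (-t * phi t) t := by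
  have h : HasDerivAt (fun u : ℝ => -u^2/2) (-t) t :=
    ((hasDerivAt_pow 2 t).neg.div_const 2).congr_deriv (by ring)
  exact (h.exp.div_const (Real.sqrt (2*Real.pi))).congr_deriv (by rw [phi]; ring)

lemma tendsto_phi_atTop : Tendsto phi atTop (nhds 0) := by
  have h : Tendsto (fun t : ℝ => -t^2/2) atTop atBot :=
    (tendsto_neg_atTop_atBot.comp (tendsto_pow_atTop two_ne_zero)).atBot_div_const two_pos
  have := (tendsto_exp_atBot.comp h).div_const (Real.sqrt (2*Real.pi))
  rwa [zero_div] at this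

lemma hasDerivAt_Phi (t : ℝ) : HasDerivAt Phi (phi t) t := by
  have hPhi : Phi = fun x => (∫ u in (0:ℝ)..x, phi u) + Phi 0 := by
    ext x
    have := intervalIntegral.integral_Iic_sub_Iic (μ := volume)
      integrable_phi.integrableOn integrable_phi.integrableOn (a := 0) (b := x)
    rw [Phi, Phi]
    linarith
  rw [hPhi]
  exact (intervalIntegral.integral_hasDerivAt_right integrable_phi.intervalIntegrable
    continuous_phi.stronglyMeasurable.stronglyMeasurableAtFilter
    continuous_phi.continuousAt).add_const (Phi 0)

lemma one_sub_Phi_eq_integral_Ioi (t : ℝ) : 1 - Phi t = ∫ u in Ioi t, phi u := by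
  have := intervalIntegral.integral_Iic_add_Ioi (μ := volume) (b := t)
    integrable_phi.integrableOn integrable_phi.integrableOn
  rw [integral_phi] at this
  rw [Phi]
  linarith

lemma integral_Ioi_mul_phi (t : ℝ) : ∫ u in Ioi t, u * phi u = phi t := by
  have hderiv : ∀ x ∈ Ici t, HasDerivAt (fun u => -phi u) (x * phi x) x := fun x _ =>
    (hasDerivAt_phi x).neg.congr_deriv (by ring)
  have := integral_Ioi_of_hasDerivAt_of_tendsto' hderiv integrable_mul_phi.integrableOn
    (by simpa using tendsto_phi_atTop.neg)
  simpa using this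

lemma mul_one_sub_Phi_le_phi (t : ℝ) : t * (1 - Phi t) ≤ phi t := by
  rw [one_sub_Phi_eq_integral_Ioi, ← integral_Ioi_mul_phi t, ← integral_const_mul]
  refine setIntegral_mono_on (integrable_phi.const_mul t).integrableOn
    integrable_mul_phi.integrableOn measurableSet_Ioi fun u hu => ?_
  exact mul_le_mul_of_nonneg_right (le_of_lt hu) (phi_pos u).le

/-- `s * E[(s Z - a)⁺]` for a standard normal `Z`; the reduction `h(ε)` is
`scaledExcess (c - μ) ((1 - ε) σ) / σ`. -/
noncomputable def scaledExcess (a s : ℝ) : ℝ := s^2 * phi (a/s) - s * (1 - Phi (a/s)) * a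

lemma hasDerivAt_scaledExcess (a : ℝ) {s : ℝ} (hs : s ≠ 0) :
    HasDerivAt (scaledExcess a) (2 * s * phi (a/s) - (1 - Phi (a/s)) * a) s := by
  have hinner : HasDerivAt (fun s => a / s) (-a / s^2) s := by
    simpa [div_eq_mul_inv, neg_div] using (hasDerivAt_inv hs).const_mul a
  have hphi := (hasDerivAt_phi (a/s)).comp s hinner
  have hPhi := ((hasDerivAt_Phi (a/s)).comp s hinner).const_sub 1
  have h := ((hasDerivAt_pow 2 s).mul hphi).sub (((hasDerivAt_id s).mul hPhi).mul_const a)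
  refine h.congr_deriv ?_
  simp only [Function.comp_apply, id, Nat.cast_ofNat]
  field_simp
  ring

lemma strictMonoOn_scaledExcess (a : ℝ) : StrictMonoOn (scaledExcess a) (Ioi 0) := by
  refine strictMonoOn_of_deriv_pos (convex_Ioi 0)
    (fun s hs => (hasDerivAt_scaledExcess a (ne_of_gt hs)).continuousAt.continuousWithinAt)
    fun s hs => ?_
  replace hs : 0 < s := by rwa [interior_Ioi] at hs
  rw [(hasDerivAt_scaledExcess a hs.ne').deriv]
  have hmills := mul_one_sub_Phi_le_phi (a/s)
  have ha : (1 - Phi (a/s)) * a = s * ((a/s) * (1 - Phi (a/s))) := by field_simp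
  rw [ha]
  linarith [mul_pos hs (phi_pos (a/s)), mul_le_mul_of_nonneg_left hmills hs.le]

theorem stmt8_general (μ c σ : ℝ) (hσ : 0 < σ) :
    StrictAntiOn (fun ε : ℝ =>
        (1-ε)^2 * phi ((c-μ)/((1-ε)*σ)) * σ
          - (1-ε) * (1 - Phi ((c-μ)/((1-ε)*σ))) * (c-μ))
      (Set.Ioo (-1) 1) := by
  have hscale : ∀ ε : ℝ, (1-ε)^2 * phi ((c-μ)/((1-ε)*σ)) * σ
      - (1-ε) * (1 - Phi ((c-μ)/((1-ε)*σ))) * (c-μ) = scaledExcess (c-μ) ((1-ε)*σ) / σ := by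
    intro ε
    rw [scaledExcess]
    field_simp
  intro x hx y hy hxy
  simp only [hscale]
  refine div_lt_div_of_pos_right (strictMonoOn_scaledExcess (c-μ) ?_ ?_ ?_) hσ
  · exact mul_pos (by linarith [hy.2]) hσ
  · exact mul_pos (by linarith [hx.2]) hσ
  exact mul_lt_mul_of_pos_right (by linarith) hσ

theorem stmt8 (μ c σ : ℝ) (hc : μ < c) (hσ : 0 < σ) :
    StrictAntiOn (fun ε : ℝ =>
        (1-ε)^2 * phi ((c-μ)/((1-ε)*σ)) * σ
          - (1-ε) * (1 - Phi ((c-μ)/((1-ε)*σ))) * (c-μ))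
      (Set.Ioo (-1) 1) :=
  stmt8_general μ c σ hσ
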